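/- Under the hypothesis β ≡ τ(β) (mod π) for all β ∈ G(P1), for each k ∈ ℕ₀ the set G⁴_{k,0} equals the reflection of G³_{k,0}: G⁴_{k,0} = {(b,a) : (a,b) ∈ G³_{k,0}} − (−kπ, kπ); in particular |G³_{k,0}| = |G⁴_{k,0}|. -/
import Mathlib


/-- An abstract algebraic function field of one variable, presented through the
discrete valuations `v P` attached to its places, together with its genus. -/
structure FnField where
  F : Type
  [fieldF : Field F]
  Place : Type
  /-- the (normalized discrete) valuation at each place -/
  v : Place → F → ℤ
  v_one : ∀ P, v P 1 = 0
  v_mul : ∀ P (x y : F), x ≠ 0 → y ≠ 0 → v P (x * y) = v P x + v P y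
  v_add : ∀ P (x y : F), x ≠ 0 → y ≠ 0 → x + y ≠ 0 → min (v P x) (v P y) ≤ v P (x + y)
  finite_supp : ∀ x : F, x ≠ 0 → {P | v P x ≠ 0}.Finite
  deg_zero : ∀ x : F, x ≠ 0 → ∀ s : Finset Place, {P | v P x ≠ 0} ⊆ s → ∑ P ∈ s, v P x = 0
  genus : ℕ
  /-- the number of gaps at any place equals the genus (Weierstrass gap theorem) -/
  genus_spec : ∀ P,
    {s : ℕ | ¬ ∃ x : F, x ≠ 0 ∧ v P x = -(s : ℤ) ∧ ∀ Q, Q ≠ P → 0 ≤ v Q x}.ncard = genus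

attribute [instance] FnField.fieldF

namespace FnField

variable (C : FnField)

/-- `(s₁, s₂) ∈ H(P₁, P₂)`: there is a function with pole divisor `s₁P₁ + s₂P₂`. -/
def Hpair (P1 P2 : C.Place) (s : ℕ × ℕ) : Prop :=
  ∃ x : C.F, x ≠ 0 ∧ C.v P1 x = -(s.1 : ℤ) ∧ C.v P2 x = -(s.2 : ℤ) ∧
    ∀ Q, Q ≠ P1 → Q ≠ P2 → 0 ≤ C.v Q x

/-- `s ∈ H(P)`: there is a function with pole divisor `sP`. -/
def Hone (P : C.Place) (s : ℕ) : Prop :=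
  ∃ x : C.F, x ≠ 0 ∧ C.v P x = -(s : ℤ) ∧ ∀ Q, Q ≠ P → 0 ≤ C.v Q x

/-- `s` is a gap at `P`. -/
def Gap (P : C.Place) (s : ℕ) : Prop := ¬ C.Hone P s

/-- `τ(β) = min {γ : (β, γ) ∈ H(P₁, P₂)}`. -/
noncomputable def tau (P1 P2 : C.Place) (β : ℕ) : ℕ := sInf {γ : ℕ | C.Hpair P1 P2 (β, γ)}

/-- `k (P₁ - P₂)` is a principal divisor. -/
def IsPrincipalDiff (P1 P2 : C.Place) (k : ℤ) : Prop :=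
  ∃ x : C.F, x ≠ 0 ∧ C.v P1 x = k ∧ C.v P2 x = -k ∧ ∀ Q, Q ≠ P1 → Q ≠ P2 → C.v Q x = 0

/-- the period `π` of `H(P₁, P₂)`: the least `k > 0` with `k(P₁ - P₂)` principal. -/
noncomputable def period (P1 P2 : C.Place) : ℕ := sInf {k : ℕ | 0 < k ∧ C.IsPrincipalDiff P1 P2 (k : ℤ)}

/-- the minimal generating set `Γ(P₁,P₂) = {(β, τ(β)) : β ∈ G(P₁)}`. -/
def GammaSet (P1 P2 : C.Place) : Set (ℕ × ℕ) :=
  {p | C.Gap P1 p.1 ∧ p.2 = C.tau P1 P2 p.1}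

/-- `Γ_{k₁,k₂} = Γ(P₁,P₂) ∩ ((k₁π, (k₁+1)π] × (k₂π, (k₂+1)π])`. -/
def GammaPart (P1 P2 : C.Place) (k1 k2 : ℕ) : Set (ℕ × ℕ) :=
  {p | p ∈ C.GammaSet P1 P2 ∧
    k1 * C.period P1 P2 < p.1 ∧ p.1 ≤ (k1 + 1) * C.period P1 P2 ∧
    k2 * C.period P1 P2 < p.2 ∧ p.2 ≤ (k2 + 1) * C.period P1 P2}

/-- `(s₁,s₂)` is a pure gap at `P₁,P₂`, i.e. `ℓ(s₁P₁+s₂P₂) = ℓ((s₁-1)P₁+(s₂-1)P₂)`,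
formulated as: no function in `L(s₁P₁+s₂P₂)` attains the exact pole order `s₁` at `P₁`,
nor the exact pole order `s₂` at `P₂`. -/
def PureGap (P1 P2 : C.Place) (s : ℕ × ℕ) : Prop :=
  (¬ ∃ x : C.F, x ≠ 0 ∧ C.v P1 x = -(s.1 : ℤ) ∧ -(s.2 : ℤ) ≤ C.v P2 x ∧
      ∀ Q, Q ≠ P1 → Q ≠ P2 → 0 ≤ C.v Q x) ∧
  (¬ ∃ x : C.F, x ≠ 0 ∧ C.v P2 x = -(s.2 : ℤ) ∧ -(s.1 : ℤ) ≤ C.v P1 x ∧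
      ∀ Q, Q ≠ P1 → Q ≠ P2 → 0 ≤ C.v Q x)

/-- the pure gap set `G₀(P₁,P₂)`. -/
def PureGapSet (P1 P2 : C.Place) : Set (ℕ × ℕ) := {s | C.PureGap P1 P2 s}

/-- `G_{k₁,k₂} = G₀(P₁,P₂) ∩ ((k₁π, (k₁+1)π] × (k₂π, (k₂+1)π])`. -/
def PureGapPart (P1 P2 : C.Place) (k1 k2 : ℕ) : Set (ℕ × ℕ) :=
  {p | p ∈ C.PureGapSet P1 P2 ∧
    k1 * C.period P1 P2 < p.1 ∧ p.1 ≤ (k1 + 1) * C.period P1 P2 ∧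
    k2 * C.period P1 P2 < p.2 ∧ p.2 ≤ (k2 + 1) * C.period P1 P2}

end FnField

/-- componentwise minimum (greatest lower bound) on `ℕ × ℕ`. -/
def glb (u v : ℕ × ℕ) : ℕ × ℕ := (min u.1 v.1, min u.2 v.2)

/-- `u ⋠ v` for the componentwise partial order on `ℕ × ℕ`. -/
def notPrec (u v : ℕ × ℕ) : Prop := v.1 < u.1 ∨ v.2 < u.2

namespace FnField

variable (C : FnField)

/-- `G¹_{k,0} = {glb(u,v) : u ∈ Γ_{k,k₂}, v ∈ Γ_{k₁,0}, k < k₁, 0 < k₂}`. -/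
def G1part (P1 P2 : C.Place) (k : ℕ) : Set (ℕ × ℕ) :=
  {p | ∃ u v k1 k2, u ∈ C.GammaPart P1 P2 k k2 ∧ v ∈ C.GammaPart P1 P2 k1 0 ∧
    k < k1 ∧ 0 < k2 ∧ p = glb u v}

/-- `G²_{k,0} = {glb(u,v) : u, v ∈ Γ_{k,0}, u ⋠ v, v ⋠ u}`. -/
def G2part (P1 P2 : C.Place) (k : ℕ) : Set (ℕ × ℕ) :=
  {p | ∃ u v, u ∈ C.GammaPart P1 P2 k 0 ∧ v ∈ C.GammaPart P1 P2 k 0 ∧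
    notPrec u v ∧ notPrec v u ∧ p = glb u v}

/-- `G³_{k,0} = {glb(u,v) : u ∈ Γ_{k,0}, v ∈ Γ_{k₁,0}, u ⋠ v, k < k₁}`. -/
def G3part (P1 P2 : C.Place) (k : ℕ) : Set (ℕ × ℕ) :=
  {p | ∃ u v k1, u ∈ C.GammaPart P1 P2 k 0 ∧ v ∈ C.GammaPart P1 P2 k1 0 ∧
    notPrec u v ∧ k < k1 ∧ p = glb u v}

/-- `G⁴_{k,0} = {glb(u,v) : u ∈ Γ_{k,k₂}, v ∈ Γ_{k,0}, v ⋠ u, 0 < k₂}`. -/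
def G4part (P1 P2 : C.Place) (k : ℕ) : Set (ℕ × ℕ) :=
  {p | ∃ u v k2, u ∈ C.GammaPart P1 P2 k k2 ∧ v ∈ C.GammaPart P1 P2 k 0 ∧
    notPrec v u ∧ 0 < k2 ∧ p = glb u v}

end FnField


/-! ### Auxiliary lemmas -/

namespace FnField

variable (C : FnField)

lemma v_inv' (P : C.Place) (x : C.F) (hx : x ≠ 0) : C.v P x⁻¹ = - C.v P x := by
  have h := C.v_mul P x x⁻¹ hx (inv_ne_zero hx)
  rw [mul_inv_cancel₀ hx, C.v_one] at h
  omega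

lemma v_pow' (P : C.Place) (x : C.F) (hx : x ≠ 0) (m : ℕ) :
    C.v P (x ^ m) = m * C.v P x := by
  induction m with
  | zero => simp [C.v_one]
  | succ m ih =>
    rw [pow_succ, C.v_mul P _ _ (pow_ne_zero m hx) hx, ih]
    push_cast
    ring

lemma v_zpow' (P : C.Place) (x : C.F) (hx : x ≠ 0) (j : ℤ) :
    C.v P (x ^ j) = j * C.v P x := by
  obtain ⟨m, rfl | rfl⟩ := j.eq_nat_or_neg
  · rw [zpow_natCast, C.v_pow' P x hx]
  · rw [zpow_neg, zpow_natCast, C.v_inv' P _ (pow_ne_zero m hx), C.v_pow' P x hx]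
    push_cast
    ring

lemma v_mul_zpow (P : C.Place) {x f : C.F} (hx : x ≠ 0) (hf : f ≠ 0) (j : ℤ) :
    C.v P (f * x ^ j) = C.v P f + j * C.v P x := by
  rw [C.v_mul P _ _ hf (zpow_ne_zero j hx), C.v_zpow' P x hx]

section Shift

variable {P1 P2 : C.Place} (hP : P1 ≠ P2) {n : ℕ} {x : C.F} (hx0 : x ≠ 0)
  (hx1 : C.v P1 x = (n : ℤ)) (hx2 : C.v P2 x = -(n : ℤ))
  (hx3 : ∀ Q, Q ≠ P1 → Q ≠ P2 → C.v Q x = 0)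

include hx0 hx1 hx2 hx3

lemma hpair_shift {a b a' b' : ℕ} (j : ℤ)
    (ha : (a' : ℤ) = (a : ℤ) - j * n) (hb : (b' : ℤ) = (b : ℤ) + j * n)
    (h : C.Hpair P1 P2 (a, b)) : C.Hpair P1 P2 (a', b') := by
  obtain ⟨f, hf0, hf1, hf2, hf3⟩ := h
  refine ⟨f * x ^ j, mul_ne_zero hf0 (zpow_ne_zero j hx0), ?_, ?_, ?_⟩
  · rw [C.v_mul_zpow P1 hx0 hf0, hf1, hx1]; simp at ha ⊢; omega
  · rw [C.v_mul_zpow P2 hx0 hf0, hf2, hx2]; simp at hb ⊢; omega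
  · intro Q hQ1 hQ2
    rw [C.v_mul_zpow Q hx0 hf0, hx3 Q hQ1 hQ2, mul_zero, add_zero]
    exact hf3 Q hQ1 hQ2

lemma hpair_to_hone {a b a' : ℕ} (j : ℤ)
    (ha : (a' : ℤ) = (a : ℤ) - j * n) (hb : (b : ℤ) + j * n ≤ 0)
    (h : C.Hpair P1 P2 (a, b)) : C.Hone P1 a' := by
  obtain ⟨f, hf0, hf1, hf2, hf3⟩ := h
  refine ⟨f * x ^ j, mul_ne_zero hf0 (zpow_ne_zero j hx0), ?_, ?_⟩
  · rw [C.v_mul_zpow P1 hx0 hf0, hf1, hx1]; omega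
  · intro Q hQ1
    by_cases hQ2 : Q = P2
    · subst hQ2
      rw [C.v_mul_zpow Q hx0 hf0, hf2, hx2]
      have hring : (j : ℤ) * -(n : ℤ) = -(j * n) := by ring
      rw [hring]; omega
    · rw [C.v_mul_zpow Q hx0 hf0, hx3 Q hQ1 hQ2, mul_zero, add_zero]
      exact hf3 Q hQ1 hQ2

include hP

lemma hone_shift {a a' : ℕ} (j : ℤ) (hj : j ≤ 0)
    (ha : (a' : ℤ) = (a : ℤ) - j * n)
    (h : C.Hone P1 a) : C.Hone P1 a' := by
  obtain ⟨f, hf0, hf1, hf3⟩ := h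
  refine ⟨f * x ^ j, mul_ne_zero hf0 (zpow_ne_zero j hx0), ?_, ?_⟩
  · rw [C.v_mul_zpow P1 hx0 hf0, hf1, hx1]; omega
  · intro Q hQ1
    by_cases hQ2 : Q = P2
    · subst hQ2
      rw [C.v_mul_zpow Q hx0 hf0, hx2]
      have h1 : 0 ≤ C.v Q f := hf3 Q hQ1
      nlinarith
    · rw [C.v_mul_zpow Q hx0 hf0, hx3 Q hQ1 hQ2, mul_zero, add_zero]
      exact hf3 Q hQ1

lemma hone_split {a a' : ℕ} (j : ℕ)
    (ha : (a' : ℤ) = (a : ℤ) - j * n)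
    (h : C.Hone P1 a) :
    C.Hone P1 a' ∨ ∃ γ : ℕ, (γ : ℤ) ≤ j * n ∧ C.Hpair P1 P2 (a', γ) := by
  obtain ⟨f, hf0, hf1, hf3⟩ := h
  have hg0 : f * x ^ (j : ℤ) ≠ 0 := mul_ne_zero hf0 (zpow_ne_zero _ hx0)
  have hg1 : C.v P1 (f * x ^ (j : ℤ)) = -(a' : ℤ) := by
    rw [C.v_mul_zpow P1 hx0 hf0, hf1, hx1]; omega
  have hgQ : ∀ Q, Q ≠ P1 → Q ≠ P2 → 0 ≤ C.v Q (f * x ^ (j : ℤ)) := by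
    intro Q hQ1 hQ2
    rw [C.v_mul_zpow Q hx0 hf0, hx3 Q hQ1 hQ2, mul_zero, add_zero]
    exact hf3 Q hQ1
  have hg2 : C.v P2 (f * x ^ (j : ℤ)) = C.v P2 f - j * n := by
    rw [C.v_mul_zpow P2 hx0 hf0, hx2]; ring
  rcases le_or_gt 0 (C.v P2 (f * x ^ (j : ℤ))) with hc | hc
  · left
    refine ⟨f * x ^ (j : ℤ), hg0, hg1, ?_⟩
    intro Q hQ1
    by_cases hQ2 : Q = P2
    · subst hQ2; exact hc
    · exact hgQ Q hQ1 hQ2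
  · right
    have hf2 : 0 ≤ C.v P2 f := hf3 P2 (Ne.symm hP)
    refine ⟨(-(C.v P2 f - j * n)).toNat, ?_, f * x ^ (j : ℤ), hg0, hg1, ?_, hgQ⟩
    · omega
    · rw [hg2]; omega

end Shift

end FnField

lemma eq_of_modEq_bounded {n a b : ℕ} (ha : 0 < a) (ha' : a ≤ n) (hb : 0 < b) (hb' : b ≤ n)
    (h : a ≡ b [MOD n]) : a = b := by
  have h2 : a % n = b % n := h
  rcases eq_or_lt_of_le ha' with h3 | h3 <;> rcases eq_or_lt_of_le hb' with h4 | h4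
  · omega
  · subst h3; rw [Nat.mod_self, Nat.mod_eq_of_lt h4] at h2; omega
  · subst h4; rw [Nat.mod_self, Nat.mod_eq_of_lt h3] at h2; omega
  · rw [Nat.mod_eq_of_lt h3, Nat.mod_eq_of_lt h4] at h2; omega

namespace FnField

variable (C : FnField)

lemma tau_min {P1 P2 : C.Place} {β γ : ℕ} (h : C.Hpair P1 P2 (β, γ)) :
    C.tau P1 P2 β ≤ γ := Nat.sInf_le h

lemma tau_spec {P1 P2 : C.Place} {β : ℕ}
    (hne : {γ : ℕ | C.Hpair P1 P2 (β, γ)}.Nonempty) :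
    C.Hpair P1 P2 (β, C.tau P1 P2 β) := Nat.sInf_mem hne

lemma tau_pos_spec {P1 P2 : C.Place} {β : ℕ} (h : C.tau P1 P2 β ≠ 0) :
    C.Hpair P1 P2 (β, C.tau P1 P2 β) := by
  by_cases hne : {γ : ℕ | C.Hpair P1 P2 (β, γ)}.Nonempty
  · exact C.tau_spec hne
  · exfalso
    rw [Set.not_nonempty_iff_eq_empty] at hne
    exact h (by unfold tau; rw [hne, Nat.sInf_empty])

lemma mem_gammaPart' {P1 P2 : C.Place} {j k2 β γ : ℕ}
    (hgap : C.Gap P1 β) (htau : C.tau P1 P2 β = γ)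
    (h1 : j * C.period P1 P2 < β) (h2 : β ≤ (j + 1) * C.period P1 P2)
    (h3 : k2 * C.period P1 P2 < γ) (h4 : γ ≤ (k2 + 1) * C.period P1 P2) :
    (β, γ) ∈ C.GammaPart P1 P2 j k2 := ⟨⟨hgap, htau.symm⟩, h1, h2, h3, h4⟩

lemma gammaPart_struct {P1 P2 : C.Place}
    (hmod : ∀ β : ℕ, C.Gap P1 β → β ≡ C.tau P1 P2 β [MOD C.period P1 P2])
    (j k2 : ℕ) (p : ℕ × ℕ) (hp : p ∈ C.GammaPart P1 P2 j k2) :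
    ∃ t : ℕ, 0 < t ∧ t ≤ C.period P1 P2 ∧ p.1 = j * C.period P1 P2 + t ∧
      p.2 = k2 * C.period P1 P2 + t ∧ C.Gap P1 p.1 ∧ C.tau P1 P2 p.1 = p.2 := by
  obtain ⟨⟨hgap, htau⟩, h1, h2, h3, h4⟩ := hp
  have e1 : (j + 1) * C.period P1 P2 = j * C.period P1 P2 + C.period P1 P2 := by ring
  have e2 : (k2 + 1) * C.period P1 P2 = k2 * C.period P1 P2 + C.period P1 P2 := by ring
  have hm := hmod p.1 hgap
  rw [← htau] at hm
  have hm' : p.1 % C.period P1 P2 = p.2 % C.period P1 P2 := hm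
  have hm1 : p.1 % C.period P1 P2 = (p.1 - j * C.period P1 P2) % C.period P1 P2 := by
    conv_lhs => rw [show p.1 = j * C.period P1 P2 + (p.1 - j * C.period P1 P2) by omega]
    rw [mul_comm, Nat.mul_add_mod]
  have hm2 : p.2 % C.period P1 P2 = (p.2 - k2 * C.period P1 P2) % C.period P1 P2 := by
    conv_lhs => rw [show p.2 = k2 * C.period P1 P2 + (p.2 - k2 * C.period P1 P2) by omega]
    rw [mul_comm, Nat.mul_add_mod]
  have hkey : p.1 - j * C.period P1 P2 = p.2 - k2 * C.period P1 P2 := by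
    refine eq_of_modEq_bounded (n := C.period P1 P2) (by omega) (by omega) (by omega) (by omega) ?_
    show _ % _ = _ % _
    rw [← hm1, ← hm2]; exact hm'
  exact ⟨p.1 - j * C.period P1 P2, by omega, by omega, by omega, by omega, hgap, htau.symm⟩

end FnField

/-- If `β ≡ τ(β) (mod π)` for every gap `β` at `P₁`, then
`G⁴_{k,0} = {(b,a) : (a,b) ∈ G³_{k,0}} - (-kπ, kπ)`; in particular
`|G³_{k,0}| = |G⁴_{k,0}|`. -/
theorem G4part_eq_reflect_G3part (C : FnField) (P1 P2 : C.Place) (hP : P1 ≠ P2)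
    (hmod : ∀ β : ℕ, C.Gap P1 β → β ≡ C.tau P1 P2 β [MOD C.period P1 P2]) (k : ℕ) :
    C.G4part P1 P2 k =
      (fun p : ℕ × ℕ => (p.2 + k * C.period P1 P2, p.1 - k * C.period P1 P2)) ''
        C.G3part P1 P2 k ∧
    (C.G3part P1 P2 k).ncard = (C.G4part P1 P2 k).ncard := by
  rcases Nat.eq_zero_or_pos (C.period P1 P2) with hper0 | hper
  · -- degenerate case: the period is zero and all the sets are empty
    have hG3 : C.G3part P1 P2 k = ∅ := by
      ext p
      simp only [FnField.G3part, Set.mem_setOf_eq, Set.mem_empty_iff_false, iff_false]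
      rintro ⟨u, v, k1, ⟨_, h1, h2, _, _⟩, _, _, _, _⟩
      rw [hper0] at h1 h2
      omega
    have hG4 : C.G4part P1 P2 k = ∅ := by
      ext p
      simp only [FnField.G4part, Set.mem_setOf_eq, Set.mem_empty_iff_false, iff_false]
      rintro ⟨u, v, k2, ⟨_, h1, h2, _, _⟩, _, _, _, _⟩
      rw [hper0] at h1 h2
      omega
    exact ⟨by rw [hG4, hG3, Set.image_empty], by rw [hG3, hG4]⟩
  · -- main case: the period is positive, hence realized by a principal divisor
    have hSne : {m : ℕ | 0 < m ∧ C.IsPrincipalDiff P1 P2 (m : ℤ)}.Nonempty := by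
      by_contra h
      rw [Set.not_nonempty_iff_eq_empty] at h
      have h0 : C.period P1 P2 = 0 := by
        unfold FnField.period; rw [h, Nat.sInf_empty]
      omega
    have hmem : C.period P1 P2 ∈ {m : ℕ | 0 < m ∧ C.IsPrincipalDiff P1 P2 (m : ℤ)} :=
      Nat.sInf_mem hSne
    obtain ⟨-, x, hx0, hx1, hx2, hx3⟩ := hmem
    -- the main set equality
    have hmain : C.G4part P1 P2 k =
        (fun p : ℕ × ℕ => (p.2 + k * C.period P1 P2, p.1 - k * C.period P1 P2)) ''
          C.G3part P1 P2 k := by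
      ext p
      simp only [FnField.G4part, FnField.G3part, Set.mem_setOf_eq, Set.mem_image]
      constructor
      · rintro ⟨u, v, k2, hu, hv, hnp, hk2, rfl⟩
        obtain ⟨t, ht0, htper, hu1, hu2, hugap, hutau⟩ := C.gammaPart_struct hmod k k2 u hu
        obtain ⟨s, hs0, hsper, hv1, hv2, hvgap, hvtau⟩ := C.gammaPart_struct hmod k 0 v hv
        have hk2per : 1 * C.period P1 P2 ≤ k2 * C.period P1 P2 := mul_le_mul_left hk2 _
        have hE : (k + k2) * C.period P1 P2 = k * C.period P1 P2 + k2 * C.period P1 P2 := by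
          ring
        unfold notPrec at hnp
        have hts : t < s := by rcases hnp with h | h <;> omega
        -- the shifted gap
        have hbgap : C.Gap P1 ((k + k2) * C.period P1 P2 + t) := by
          intro hone
          have hsplit := C.hone_split hP hx0 hx1 hx2 hx3
            (a := (k + k2) * C.period P1 P2 + t) (a' := k * C.period P1 P2 + t) k2
            (by push_cast; ring) hone
          rcases hsplit with h | ⟨γ, hγle, hγ⟩
          · rw [← hu1] at h; exact hugap h
          · have h1 := C.tau_min hγ
            rw [← hu1, hutau, hu2] at h1
            have hγle' : γ ≤ k2 * C.period P1 P2 := by exact_mod_cast hγle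
            omega
        have hbpair : C.Hpair P1 P2 ((k + k2) * C.period P1 P2 + t, t) := by
          have h0 : C.tau P1 P2 u.1 ≠ 0 := by rw [hutau, hu2]; omega
          have hp1 := C.tau_pos_spec h0
          rw [hutau, hu1, hu2] at hp1
          exact C.hpair_shift hx0 hx1 hx2 hx3 (-(k2 : ℤ)) (by push_cast; ring)
            (by push_cast; ring) hp1
        have hbtau : C.tau P1 P2 ((k + k2) * C.period P1 P2 + t) = t := by
          have hne : {γ : ℕ | C.Hpair P1 P2 ((k + k2) * C.period P1 P2 + t, γ)}.Nonempty :=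
            ⟨t, hbpair⟩
          have hmem2 := C.tau_spec hne
          have hle := C.tau_min hbpair
          rcases Nat.eq_zero_or_pos (C.tau P1 P2 ((k + k2) * C.period P1 P2 + t)) with h0 | hpos
          · exfalso
            rw [h0] at hmem2
            exact hbgap (C.hpair_to_hone hx0 hx1 hx2 hx3 0 (by push_cast; ring) (by simp) hmem2)
          · have hc := hmod _ hbgap
            have hc' : ((k + k2) * C.period P1 P2 + t) % C.period P1 P2 =
                C.tau P1 P2 ((k + k2) * C.period P1 P2 + t) % C.period P1 P2 := hc
            have hbt : ((k + k2) * C.period P1 P2 + t) % C.period P1 P2 =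
                t % C.period P1 P2 := by
              rw [mul_comm, Nat.mul_add_mod]
            have hfin : C.tau P1 P2 ((k + k2) * C.period P1 P2 + t) % C.period P1 P2 =
                t % C.period P1 P2 := by rw [← hc', hbt]
            exact eq_of_modEq_bounded hpos (le_trans hle htper) ht0 htper hfin
        have hv3mem : ((k + k2) * C.period P1 P2 + t, t) ∈ C.GammaPart P1 P2 (k + k2) 0 := by
          refine C.mem_gammaPart' hbgap hbtau ?_ ?_ ?_ ?_
          · omega
          · have : ((k + k2) + 1) * C.period P1 P2 =
                (k + k2) * C.period P1 P2 + C.period P1 P2 := by ring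
            omega
          · omega
          · omega
        refine ⟨(k * C.period P1 P2 + s, t),
          ⟨v, ((k + k2) * C.period P1 P2 + t, t), k + k2, hv, hv3mem, ?_, by omega, ?_⟩, ?_⟩
        · refine Or.inr ?_
          show t < v.2
          omega
        · refine Prod.ext_iff.mpr ⟨?_, ?_⟩
          · show k * C.period P1 P2 + s = min v.1 ((k + k2) * C.period P1 P2 + t)
            omega
          · show t = min v.2 t
            omega
        · refine Prod.ext_iff.mpr ⟨?_, ?_⟩
          · show t + k * C.period P1 P2 = min u.1 v.1
            omega
          · show (k * C.period P1 P2 + s) - k * C.period P1 P2 = min u.2 v.2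
            omega
      · rintro ⟨q, ⟨u3, v3, k1, hu3, hv3, hnp3, hk1, rfl⟩, rfl⟩
        obtain ⟨t, ht0, htper, hu1, hu2, hugap, hutau⟩ := C.gammaPart_struct hmod k 0 u3 hu3
        obtain ⟨s, hs0, hsper, hv1, hv2, hvgap, hvtau⟩ := C.gammaPart_struct hmod k1 0 v3 hv3
        have hk1per : (k + 1) * C.period P1 P2 ≤ k1 * C.period P1 P2 :=
          mul_le_mul_left hk1 _
        have hE : (k + 1) * C.period P1 P2 = k * C.period P1 P2 + C.period P1 P2 := by ring
        unfold notPrec at hnp3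
        have hst : s < t := by rcases hnp3 with h | h <;> omega
        -- k*per + s is a gap
        have hgap2 : C.Gap P1 (k * C.period P1 P2 + s) := by
          intro hone
          have h2 := C.hone_shift hP hx0 hx1 hx2 hx3 (-((k1 - k : ℕ) : ℤ)) (by omega)
            (a := k * C.period P1 P2 + s) (a' := k1 * C.period P1 P2 + s)
            (by push_cast [Nat.cast_sub hk1.le]; ring) hone
          rw [← hv1] at h2
          exact hvgap h2
        have hvtau' : C.tau P1 P2 (k1 * C.period P1 P2 + s) = s := by
          rw [← hv1, hvtau, hv2]
          omega
        have hsp : C.Hpair P1 P2 (k1 * C.period P1 P2 + s, s) := by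
          have h := C.tau_pos_spec (β := k1 * C.period P1 P2 + s) (by rw [hvtau']; omega)
          rwa [hvtau'] at h
        have hsp2 : C.Hpair P1 P2 (k * C.period P1 P2 + s, s + (k1 - k) * C.period P1 P2) :=
          C.hpair_shift hx0 hx1 hx2 hx3 (((k1 - k : ℕ) : ℤ))
            (by push_cast [Nat.cast_sub hk1.le]; ring)
            (by push_cast [Nat.cast_sub hk1.le]; ring) hsp
        have hne : {γ : ℕ | C.Hpair P1 P2 (k * C.period P1 P2 + s, γ)}.Nonempty := ⟨_, hsp2⟩
        have hmemtau := C.tau_spec hne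
        have htaupos : C.tau P1 P2 (k * C.period P1 P2 + s) ≠ 0 := by
          intro h0
          rw [h0] at hmemtau
          exact hgap2 (C.hpair_to_hone hx0 hx1 hx2 hx3 0 (by push_cast; ring) (by simp) hmemtau)
        have hsm : s ≤ (k1 - k) * C.period P1 P2 := by
          have h1 : 1 * C.period P1 P2 ≤ (k1 - k) * C.period P1 P2 :=
            mul_le_mul_left (by omega) _
          omega
        have htaubig : C.period P1 P2 < C.tau P1 P2 (k * C.period P1 P2 + s) := by
          by_contra hle
          push_neg at hle
          have hc := hmod _ hgap2
          have hc' : (k * C.period P1 P2 + s) % C.period P1 P2 =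
              C.tau P1 P2 (k * C.period P1 P2 + s) % C.period P1 P2 := hc
          have hbt : (k * C.period P1 P2 + s) % C.period P1 P2 = s % C.period P1 P2 := by
            rw [mul_comm, Nat.mul_add_mod]
          have hfin : C.tau P1 P2 (k * C.period P1 P2 + s) % C.period P1 P2 =
              s % C.period P1 P2 := by rw [← hc', hbt]
          have heq : C.tau P1 P2 (k * C.period P1 P2 + s) = s :=
            eq_of_modEq_bounded (Nat.pos_of_ne_zero htaupos) hle hs0 hsper hfin
          rw [heq] at hmemtau
          have hone := C.hpair_to_hone hx0 hx1 hx2 hx3 (-(((k1 - k : ℕ) : ℤ)))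
            (a' := k1 * C.period P1 P2 + s)
            (by push_cast [Nat.cast_sub hk1.le]; ring)
            (by
              have h1 : (s : ℤ) ≤ ((k1 - k : ℕ) : ℤ) * (C.period P1 P2 : ℤ) := by
                exact_mod_cast hsm
              nlinarith [h1]) hmemtau
          rw [← hv1] at hone
          exact hvgap hone
        obtain ⟨k2, hk2a, hk2b⟩ :
            ∃ k2, k2 * C.period P1 P2 < C.tau P1 P2 (k * C.period P1 P2 + s) ∧
              C.tau P1 P2 (k * C.period P1 P2 + s) ≤ (k2 + 1) * C.period P1 P2 := by
          refine ⟨(C.tau P1 P2 (k * C.period P1 P2 + s) - 1) / C.period P1 P2, ?_, ?_⟩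
          · have h1 := Nat.div_mul_le_self (C.tau P1 P2 (k * C.period P1 P2 + s) - 1)
              (C.period P1 P2)
            omega
          · have h1 := Nat.div_add_mod (C.tau P1 P2 (k * C.period P1 P2 + s) - 1)
              (C.period P1 P2)
            have h2 := Nat.mod_lt (C.tau P1 P2 (k * C.period P1 P2 + s) - 1) hper
            have h3 : ((C.tau P1 P2 (k * C.period P1 P2 + s) - 1) / C.period P1 P2 + 1) *
                C.period P1 P2 = C.period P1 P2 *
                ((C.tau P1 P2 (k * C.period P1 P2 + s) - 1) / C.period P1 P2) +
                C.period P1 P2 := by ring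
            omega
        have hk2pos : 0 < k2 := by
          rcases Nat.eq_zero_or_pos k2 with h | h
          · subst h; omega
          · exact h
        have hu4mem : (k * C.period P1 P2 + s, C.tau P1 P2 (k * C.period P1 P2 + s)) ∈
            C.GammaPart P1 P2 k k2 := by
          refine C.mem_gammaPart' hgap2 rfl ?_ ?_ hk2a hk2b
          · omega
          · omega
        refine ⟨(k * C.period P1 P2 + s, C.tau P1 P2 (k * C.period P1 P2 + s)), u3, k2,
          hu4mem, hu3, ?_, hk2pos, ?_⟩
        · refine Or.inl ?_
          show k * C.period P1 P2 + s < u3.1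
          omega
        · refine Prod.ext_iff.mpr ⟨?_, ?_⟩
          · show min u3.2 v3.2 + k * C.period P1 P2 =
              min (k * C.period P1 P2 + s) u3.1
            omega
          · show min u3.1 v3.1 - k * C.period P1 P2 =
              min (C.tau P1 P2 (k * C.period P1 P2 + s)) u3.2
            omega
    refine ⟨hmain, ?_⟩
    rw [hmain]
    refine (Set.ncard_image_of_injOn ?_).symm
    have hged : ∀ p ∈ C.G3part P1 P2 k, k * C.period P1 P2 ≤ p.1 := by
      rintro p ⟨u, v, k1, hu, hv, _, hk1, rfl⟩
      obtain ⟨_, h1, _, _, _⟩ := hu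
      obtain ⟨_, h1', _, _, _⟩ := hv
      have h2 : k * C.period P1 P2 ≤ k1 * C.period P1 P2 := mul_le_mul_left hk1.le _
      show k * C.period P1 P2 ≤ min u.1 v.1
      omega
    intro p hp q hq hpq
    have h1 := hged p hp
    have h2 := hged q hq
    rw [Prod.mk.injEq] at hpq
    exact Prod.ext_iff.mpr ⟨by omega, by omega⟩
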